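/- Let Aries_BC : B(λ) → C(2λ) and Aries_CB : C(μ) → B(2μ) be the virtualization maps associated to the Dynkin diagram embeddings B_n ↪ C_n (with Ψ(i)=i, γ_i = 2 for i < n, γ_n = 1) and C_n ↪ B_n (with Ψ(i)=i, γ_i = 1 for i < n, γ_n = 2). Then the compositions are 2-dilations: Aries_CB ∘ Aries_BC = Θ₂ on each type B_n highest weight crystal, and Aries_BC ∘ Aries_CB = Θ₂ on each type C_n highest weight crystal. -/

import Mathlib

/-- Iterate a partial operator `n` times. -/
def iterOpt {α : Type*} (op : α → Option α) : ℕ → α → Option α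
  | 0, a => some a
  | n + 1, a => (op a).bind (iterOpt op n)

/-- Apply `op i₁ ∘ ⋯ ∘ op iₖ` to `a` (the head of the list is applied last). -/
def applyWord {I α : Type*} (op : I → α → Option α) : List I → α → Option α
  | [], a => some a
  | i :: l, a => (applyWord op l a).bind (op i)

/-- Apply `op i₁ ^ m₁ ∘ ⋯ ∘ op iₖ ^ mₖ` to `a` (the head of the list is applied last). -/
def applyPows {I α : Type*} (op : I → α → Option α) : List (I × ℕ) → α → Option α
  | [], a => some a
  | p :: l, a => (applyPows op l a).bind (iterOpt (op p.1) p.2)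

/-- A normal crystal for the index set `I`, with weight lattice `P`, on the set `B`.
`pairing i` is the pairing `⟨α_i^∨, ·⟩` with the simple coroot, and `alpha i` is the
simple root `α_i`. -/
structure Crystal (I : Type*) (P : Type*) [AddCommGroup P] (B : Type*) where
  wt : B → P
  e : I → B → Option B
  f : I → B → Option B
  eps : I → B → ℕ
  phi : I → B → ℕ
  pairing : I → P → ℤ
  alpha : I → P
  pairing_add : ∀ i μ ν, pairing i (μ + ν) = pairing i μ + pairing i ν
  c1 : ∀ i b, (phi i b : ℤ) - (eps i b : ℤ) = pairing i (wt b)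
  wt_e : ∀ i a b, e i a = some b → wt b = wt a + alpha i
  e_iff_f : ∀ i a b, e i a = some b ↔ f i b = some a
  e_none : ∀ i b, e i b = none ↔ eps i b = 0
  f_none : ∀ i b, f i b = none ↔ phi i b = 0
  eps_e : ∀ i a b, e i a = some b → eps i b + 1 = eps i a
  phi_f : ∀ i a b, f i a = some b → phi i b + 1 = phi i a

namespace Crystal

variable {I : Type*} {P : Type*} [AddCommGroup P] {B : Type*} (C : Crystal I P B)

/-- The Weyl-group simple reflection acting on a crystal, flipping each `i`-string. -/
def sAct (i : I) (b : B) : B :=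
  if C.eps i b ≤ C.phi i b then (iterOpt (C.f i) (C.phi i b - C.eps i b) b).getD b
  else (iterOpt (C.e i) (C.eps i b - C.phi i b) b).getD b

/-- Action on the crystal of a word in the simple reflections. -/
def wAct : List I → B → B
  | [], b => b
  | i :: l, b => C.sAct i (wAct l b)

/-- The set of extremal weight vectors (keys): the Weyl-group orbit of `hw`. -/
def extremalSet (hw : B) : Set B := {b | ∃ l : List I, C.wAct l hw = b}

/-- Weight of an element `b₁ ⊗ ⋯ ⊗ b_m` of a tensor power `B^{⊗m}`, modelled as a list. -/
def twt (l : List B) : P := (l.map C.wt).sum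

/-- `ε_i` on tensor powers (Kashiwara convention). -/
def teps (i : I) : List B → ℤ
  | [] => 0
  | b :: l => max (C.eps i b) (teps i l - C.pairing i (C.wt b))

/-- `φ_i` on tensor powers (Kashiwara convention). -/
def tphi (i : I) : List B → ℤ
  | [] => 0
  | b :: l => max (tphi i l) ((C.phi i b : ℤ) + C.pairing i (C.twt l))

/-- The crystal operator `f_i` on tensor powers `B^{⊗m}` (Kashiwara convention). -/
def tf (i : I) : List B → Option (List B)
  | [] => none
  | b :: l =>
    if C.teps i l < (C.phi i b : ℤ) then (C.f i b).map (· :: l)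
    else (tf i l).map (b :: ·)

/-- The crystal operator `e_i` on tensor powers `B^{⊗m}` (Kashiwara convention). -/
def te (i : I) : List B → Option (List B)
  | [] => none
  | b :: l =>
    if C.teps i l ≤ (C.phi i b : ℤ) then (C.e i b).map (· :: l)
    else (te i l).map (b :: ·)

end Crystal

/-- Length of `w` as a word in the generators `s`. -/
noncomputable def wordLength {I W : Type*} [Group W] (s : I → W) (w : W) : ℕ :=
  sInf {k | ∃ l : List I, l.length = k ∧ (l.map s).prod = w}

/-- `l` is a reduced word for `w` in the generators `s`. -/
def IsReducedWord {I W : Type*} [Group W] (s : I → W) (w : W) (l : List I) : Prop :=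
  (l.map s).prod = w ∧ l.length = wordLength s w

/-- The strong Bruhat order: `u ≤ v` iff every reduced expression of `v` admits a
subexpression that is a reduced expression for `u`. -/
def BruhatLE {I W : Type*} [Group W] (s : I → W) (u v : W) : Prop :=
  ∀ l : List I, IsReducedWord s v l → ∃ l' : List I, l'.Sublist l ∧ IsReducedWord s u l'

/-- The virtual crystal operator attached to the folding data `(ψl, γ)`: the product
`∏_{j ∈ ψ(i)} (op j)^{γ i}` (the nodes in an orbit `ψ(i)` are pairwise non-adjacent,
so this product is independent of the order of the factors). -/
def vOp {IX IY α : Type*} (op : IY → α → Option α)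
    (ψl : IX → List IY) (γ : IX → ℕ) (i : IX) (a : α) : Option α :=
  (ψl i).foldlM (fun x j => iterOpt (op j) (γ i) x) a

lemma vOp_single {IX α : Type*} (op : IX → α → Option α) (γ : IX → ℕ) (i : IX) (a : α) :
    vOp op (fun i => [i]) γ i a = iterOpt (op i) (γ i) a := by
  simp [vOp, List.foldlM]

lemma iterOpt_add {α : Type*} (op : α → Option α) (m k : ℕ) (a : α) :
    iterOpt op (m + k) a = (iterOpt op m a).bind (iterOpt op k) := by
  induction m generalizing a with
  | zero => simp [iterOpt]
  | succ m ih =>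
    have h : m + 1 + k = (m + k) + 1 := by ring
    rw [h]
    show (op a).bind (iterOpt op (m + k)) = ((op a).bind (iterOpt op m)).bind (iterOpt op k)
    cases op a with
    | none => rfl
    | some b => simpa using ih b

lemma map_iterOpt {α β : Type*} (g : α → β) (op : α → Option α) (op' : β → Option β)
    (γ : ℕ) (h : ∀ c, (op c).map g = iterOpt op' γ (g c)) :
    ∀ k c, (iterOpt op k c).map g = iterOpt op' (γ * k) (g c) := by
  intro k
  induction k with
  | zero => intro c; simp [iterOpt]
  | succ k ih =>
    intro c
    have h0 : γ * (k + 1) = γ + γ * k := by ring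
    conv_rhs => rw [h0, iterOpt_add]
    show ((op c).bind (iterOpt op k)).map g = _
    cases hc : op c with
    | none =>
      have := h c
      rw [hc] at this
      simp [← this]
    | some c' =>
      have hh := h c
      rw [hc] at hh
      simp only [Option.map_some] at hh
      rw [← hh]
      simpa using ih c'

/-!
STATEMENT 7. Let `Aries_BC : B(λ) → C(2λ)` and `Aries_CB : C(μ) → B(2μ)` be the
virtualization maps associated to the Dynkin diagram embeddings `B_n ↪ C_n`
(with `Ψ(i) = i`, `γ_i = 2` for `i < n`, `γ_n = 1`) and `C_n ↪ B_n` (with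
`Ψ(i) = i`, `γ_i = 1` for `i < n`, `γ_n = 2`).  Then the compositions are
`2`-dilations: `Aries_CB ∘ Aries_BC = Θ₂` on each type `B_n` highest weight
crystal, and `Aries_BC ∘ Aries_CB = Θ₂` on each type `C_n` highest weight crystal,
where `Θ₂ : B(λ) → B(2λ)` is Kashiwara's unique embedding with `b_λ ↦ b_{2λ}` and
`f_{i₁}⋯f_{i_l}(b_λ) ↦ f_{i₁}²⋯f_{i_l}²(b_{2λ})`.

Below, the index set for both `B_n` and `C_n` is `Fin n` (node `i` representing the
simple root `α_{i+1}`, so the last node `n` is `⟨n-1, _⟩`), the orbit map of both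
embeddings is `i ↦ [i]`, and the multipliers are `γBC` and `γCB`. -/
theorem BC_and_CB_virtualizations_compose_to_two_dilations
    {PB PC B1 Bc B2 C1 Cb C2 : Type*} [AddCommGroup PB] [AddCommGroup PC]
    [Fintype B1] [Fintype Bc] [Fintype B2] [Fintype C1] [Fintype Cb] [Fintype C2]
    (n : ℕ) (hn : 0 < n)
    (γBC γCB : Fin n → ℕ)
    (hγBC : ∀ i : Fin n, γBC i = if (i : ℕ) + 1 = n then 1 else 2)
    (hγCB : ∀ i : Fin n, γCB i = if (i : ℕ) + 1 = n then 2 else 1)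
    (ψBC : PB → PC) (ψCB : PC → PB)
    -- ————— first composition: `B(λ) → C(ψ_BC λ) → B(ψ_CB ψ_BC λ) = B(2λ)` —————
    -- the type `B_n` crystal `B(λ)`
    (CB1 : Crystal (Fin n) PB B1) (lam : PB) (hw1 : B1)
    (hwt1 : CB1.wt hw1 = lam) (hhw1 : ∀ i, CB1.e i hw1 = none)
    (hconn1 : ∀ b : B1, ∃ l : List (Fin n), applyWord CB1.f l hw1 = some b)
    -- the type `C_n` crystal `C(ψ_BC λ) = C(2λ)`
    (CCc : Crystal (Fin n) PC Bc) (hwc : Bc)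
    (hwtc : CCc.wt hwc = ψBC lam) (hhwc : ∀ i, CCc.e i hwc = none)
    (hconnc : ∀ b : Bc, ∃ l : List (Fin n), applyWord CCc.f l hwc = some b)
    -- the type `B_n` crystal `B(ψ_CB ψ_BC λ) = B(2λ)`
    (CB2 : Crystal (Fin n) PB B2) (hw2 : B2)
    (hwt2 : CB2.wt hw2 = ψCB (ψBC lam)) (hhw2 : ∀ i, CB2.e i hw2 = none)
    (hconn2 : ∀ b : B2, ∃ l : List (Fin n), applyWord CB2.f l hw2 = some b)
    -- `Aries_BC : B(λ) → C(2λ)`, the virtualization for `B_n ↪ C_n`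
    (AriesBC : B1 → Bc)
    (hBCinj : Function.Injective AriesBC) (hBChw : AriesBC hw1 = hwc)
    (hBCwt : ∀ b, CCc.wt (AriesBC b) = ψBC (CB1.wt b))
    (hBCf : ∀ i b, (CB1.f i b).map AriesBC =
        vOp CCc.f (fun i => [i]) γBC i (AriesBC b))
    (hBCe : ∀ i b, (CB1.e i b).map AriesBC =
        vOp CCc.e (fun i => [i]) γBC i (AriesBC b))
    (hBCeps : ∀ i b, CCc.eps i (AriesBC b) = γBC i * CB1.eps i b)
    (hBCphi : ∀ i b, CCc.phi i (AriesBC b) = γBC i * CB1.phi i b)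
    -- `Aries_CB : C(2λ) → B(2·2λ... ) = B(2λ)`, the virtualization for `C_n ↪ B_n`
    (AriesCB : Bc → B2)
    (hCBinj : Function.Injective AriesCB) (hCBhw : AriesCB hwc = hw2)
    (hCBwt : ∀ b, CB2.wt (AriesCB b) = ψCB (CCc.wt b))
    (hCBf : ∀ i b, (CCc.f i b).map AriesCB =
        vOp CB2.f (fun i => [i]) γCB i (AriesCB b))
    (hCBe : ∀ i b, (CCc.e i b).map AriesCB =
        vOp CB2.e (fun i => [i]) γCB i (AriesCB b))
    (hCBeps : ∀ i b, CB2.eps i (AriesCB b) = γCB i * CCc.eps i b)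
    (hCBphi : ∀ i b, CB2.phi i (AriesCB b) = γCB i * CCc.phi i b)
    -- the `2`-dilation `Θ₂ : B(λ) → B(2λ)`
    (D2B : B1 → B2)
    (hD2Bhw : D2B hw1 = hw2)
    (hD2Bf : ∀ i b b', CB1.f i b = some b' →
        iterOpt (CB2.f i) 2 (D2B b) = some (D2B b'))
    -- ————— second composition: `C(μ) → B(ψ_CB μ) → C(ψ_BC ψ_CB μ) = C(2μ)` —————
    -- the type `C_n` crystal `C(μ)`
    (CC1 : Crystal (Fin n) PC C1) (mu : PC) (hwc1 : C1)
    (hwtc1 : CC1.wt hwc1 = mu) (hhwc1 : ∀ i, CC1.e i hwc1 = none)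
    (hconnc1 : ∀ b : C1, ∃ l : List (Fin n), applyWord CC1.f l hwc1 = some b)
    -- the type `B_n` crystal `B(ψ_CB μ) = B(2μ)`
    (CCb : Crystal (Fin n) PB Cb) (hwcb : Cb)
    (hwtcb : CCb.wt hwcb = ψCB mu) (hhwcb : ∀ i, CCb.e i hwcb = none)
    (hconncb : ∀ b : Cb, ∃ l : List (Fin n), applyWord CCb.f l hwcb = some b)
    -- the type `C_n` crystal `C(ψ_BC ψ_CB μ) = C(2μ)`
    (CC2 : Crystal (Fin n) PC C2) (hwc2 : C2)
    (hwtc2 : CC2.wt hwc2 = ψBC (ψCB mu)) (hhwc2 : ∀ i, CC2.e i hwc2 = none)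
    (hconnc2 : ∀ b : C2, ∃ l : List (Fin n), applyWord CC2.f l hwc2 = some b)
    -- `Aries_CB : C(μ) → B(2μ)`
    (AriesCB' : C1 → Cb)
    (hCBinj' : Function.Injective AriesCB') (hCBhw' : AriesCB' hwc1 = hwcb)
    (hCBwt' : ∀ b, CCb.wt (AriesCB' b) = ψCB (CC1.wt b))
    (hCBf' : ∀ i b, (CC1.f i b).map AriesCB' =
        vOp CCb.f (fun i => [i]) γCB i (AriesCB' b))
    (hCBe' : ∀ i b, (CC1.e i b).map AriesCB' =
        vOp CCb.e (fun i => [i]) γCB i (AriesCB' b))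
    (hCBeps' : ∀ i b, CCb.eps i (AriesCB' b) = γCB i * CC1.eps i b)
    (hCBphi' : ∀ i b, CCb.phi i (AriesCB' b) = γCB i * CC1.phi i b)
    -- `Aries_BC : B(2μ) → C(2·2μ...) = C(2μ)`
    (AriesBC' : Cb → C2)
    (hBCinj' : Function.Injective AriesBC') (hBChw' : AriesBC' hwcb = hwc2)
    (hBCwt' : ∀ b, CC2.wt (AriesBC' b) = ψBC (CCb.wt b))
    (hBCf' : ∀ i b, (CCb.f i b).map AriesBC' =
        vOp CC2.f (fun i => [i]) γBC i (AriesBC' b))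
    (hBCe' : ∀ i b, (CCb.e i b).map AriesBC' =
        vOp CC2.e (fun i => [i]) γBC i (AriesBC' b))
    (hBCeps' : ∀ i b, CC2.eps i (AriesBC' b) = γBC i * CCb.eps i b)
    (hBCphi' : ∀ i b, CC2.phi i (AriesBC' b) = γBC i * CCb.phi i b)
    -- the `2`-dilation `Θ₂ : C(μ) → C(2μ)`
    (D2C : C1 → C2)
    (hD2Chw : D2C hwc1 = hwc2)
    (hD2Cf : ∀ i b b', CC1.f i b = some b' →
        iterOpt (CC2.f i) 2 (D2C b) = some (D2C b')) :
    (∀ b : B1, AriesCB (AriesBC b) = D2B b) ∧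
    (∀ b : C1, AriesBC' (AriesCB' b) = D2C b) := by
  have hγ2 : ∀ i : Fin n, γCB i * γBC i = 2 := by
    intro i; rw [hγBC i, hγCB i]; by_cases h : (i : ℕ) + 1 = n <;> simp [h]
  have hγ2' : ∀ i : Fin n, γBC i * γCB i = 2 := by
    intro i; rw [mul_comm]; exact hγ2 i
  constructor
  · -- first composition
    have step : ∀ (i : Fin n) (b b' : B1), CB1.f i b = some b' →
        iterOpt (CB2.f i) 2 (AriesCB (AriesBC b)) = some (AriesCB (AriesBC b')) := by
      intro i b b' hf
      have h1 : iterOpt (CCc.f i) (γBC i) (AriesBC b) = some (AriesBC b') := by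
        rw [← vOp_single, ← hBCf, hf]; rfl
      have h2 := map_iterOpt AriesCB (CCc.f i) (CB2.f i) (γCB i)
        (fun c => by rw [hCBf, vOp_single]) (γBC i) (AriesBC b)
      rw [h1, hγ2 i] at h2
      simpa using h2.symm
    intro b
    obtain ⟨l, hl⟩ := hconn1 b
    induction l generalizing b with
    | nil =>
      simp only [applyWord, Option.some.injEq] at hl
      rw [← hl, hBChw, hCBhw, hD2Bhw]
    | cons i l ih =>
      simp only [applyWord] at hl
      obtain ⟨c, hc, hfc⟩ := Option.bind_eq_some_iff.mp hl
      have hc' := ih c hc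
      have h1 := step i c b hfc
      have h2 := hD2Bf i c b hfc
      rw [hc'] at h1
      rw [h1] at h2
      exact (Option.some.injEq _ _).mp h2
  · -- second composition
    have step : ∀ (i : Fin n) (b b' : C1), CC1.f i b = some b' →
        iterOpt (CC2.f i) 2 (AriesBC' (AriesCB' b)) = some (AriesBC' (AriesCB' b')) := by
      intro i b b' hf
      have h1 : iterOpt (CCb.f i) (γCB i) (AriesCB' b) = some (AriesCB' b') := by
        rw [← vOp_single, ← hCBf', hf]; rfl
      have h2 := map_iterOpt AriesBC' (CCb.f i) (CC2.f i) (γBC i)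
        (fun c => by rw [hBCf', vOp_single]) (γCB i) (AriesCB' b)
      rw [h1, hγ2' i] at h2
      simpa using h2.symm
    intro b
    obtain ⟨l, hl⟩ := hconnc1 b
    induction l generalizing b with
    | nil =>
      simp only [applyWord, Option.some.injEq] at hl
      rw [← hl, hCBhw', hBChw', hD2Chw]
    | cons i l ih =>
      simp only [applyWord] at hl
      obtain ⟨c, hc, hfc⟩ := Option.bind_eq_some_iff.mp hl
      have hc' := ih c hc
      have h1 := step i c b hfc
      have h2 := hD2Cf i c b hfc
      rw [hc'] at h1
      rw [h1] at h2
      exact (Option.some.injEq _ _).mp h2
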